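/- arXiv:1906.00331 — 5 statements merged into one kernel-verified Lean document; each statement's English description precedes it below -/
import Mathlib

section
/- Let f : ℝ^m × ℝ^n → ℝ be ℓ-smooth and suppose f(x,·) is μ-strongly concave on a convex set Y for each x. Then the map y*(x) := argmax_{y ∈ Y} f(x,y) is well-defined and κ-Lipschitz, where κ = ℓ/μ; i.e., ‖y*(x₁) − y*(x₂)‖ ≤ κ‖x₁ − x₂‖ for all x₁, x₂. -/
open Set
open scoped RealInnerProductSpace

/-- If `g` is `μ`-strongly concave on `Y` and attains its max on `Y` at `y₁`, then
`g y + μ/2 * ‖y - y₁‖^2 ≤ g y₁` for all `y ∈ Y`. -/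
lemma strong_max_key {n : ℕ} {Y : Set (EuclideanSpace ℝ (Fin n))} {μ : ℝ} (hμ : 0 < μ)
    {g : EuclideanSpace ℝ (Fin n) → ℝ} (hconc : StrongConcaveOn Y μ g)
    {y₁ y : EuclideanSpace ℝ (Fin n)} (hy₁ : y₁ ∈ Y) (hy : y ∈ Y)
    (hmax : IsMaxOn g Y y₁) :
    g y + μ / 2 * ‖y - y₁‖ ^ 2 ≤ g y₁ := by
  set K : ℝ := μ / 2 * ‖y - y₁‖ ^ 2 with hK
  -- for every t ∈ (0,1], g y - g y₁ + K ≤ t * K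
  have key : ∀ t : ℝ, 0 < t → t ≤ 1 → g y - g y₁ + K ≤ t * K := by
    intro t ht ht1
    have hcomb := hconc.2 hy hy₁ ht.le (by linarith : (0:ℝ) ≤ 1 - t) (by ring)
    have hmem : t • y + (1 - t) • y₁ ∈ Y :=
      hconc.1 hy hy₁ ht.le (by linarith) (by ring)
    have hle : g (t • y + (1 - t) • y₁) ≤ g y₁ := (isMaxOn_iff.mp hmax) _ hmem
    have h2 : t * g y + (1 - t) * g y₁ + t * (1 - t) * K ≤ g y₁ := by
      simpa [smul_eq_mul, hK] using hcomb.trans hle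
    have h3 : t * (g y - g y₁ + K) ≤ t * (t * K) := by nlinarith
    exact le_of_mul_le_mul_left h3 ht
  by_contra h
  push_neg at h
  have hc : 0 < g y - g y₁ + K := by linarith
  have hK0 : 0 ≤ K := by positivity
  rcases eq_or_lt_of_le hK0 with hK0' | hKpos
  · have := key 1 one_pos le_rfl
    rw [← hK0', one_mul] at this
    linarith
  · set t := min 1 ((g y - g y₁ + K) / (2 * K)) with htdef
    have htpos : 0 < t := lt_min one_pos (by positivity)
    have ht1 : t ≤ 1 := min_le_left _ _
    have := key t htpos ht1
    have h2 : t * K ≤ (g y - g y₁ + K) / (2 * K) * K :=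
      mul_le_mul_of_nonneg_right (min_le_right _ _) hK0
    have h3 : (g y - g y₁ + K) / (2 * K) * K = (g y - g y₁ + K) / 2 := by
      field_simp
    linarith

/-- For `f` ℓ-smooth and `f x ·` μ-strongly concave on a convex, closed,
bounded set `Y`, the argmax map `y*` is well-defined (unique maximizer for each `x`)
and is `κ = ℓ/μ`-Lipschitz. -/
theorem statement0 {m n : ℕ} (f : EuclideanSpace ℝ (Fin m) → EuclideanSpace ℝ (Fin n) → ℝ)
    (ℓ μ : ℝ) (hℓ : 0 < ℓ) (hμ : 0 < μ)
    (Y : Set (EuclideanSpace ℝ (Fin n))) (hYconv : Convex ℝ Y) (hYclosed : IsClosed Y)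
    (hYbdd : Bornology.IsBounded Y) (hYne : Y.Nonempty)
    (gx : EuclideanSpace ℝ (Fin m) → EuclideanSpace ℝ (Fin n) → EuclideanSpace ℝ (Fin m))
    (gy : EuclideanSpace ℝ (Fin m) → EuclideanSpace ℝ (Fin n) → EuclideanSpace ℝ (Fin n))
    (hgx : ∀ x y, HasGradientAt (fun x' => f x' y) (gx x y) x)
    (hgy : ∀ x y, HasGradientAt (fun y' => f x y') (gy x y) y)
    (hsmooth : ∀ x x' y y',
      ‖gx x y - gx x' y'‖ ≤ ℓ * (‖x - x'‖ + ‖y - y'‖) ∧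
      ‖gy x y - gy x' y'‖ ≤ ℓ * (‖x - x'‖ + ‖y - y'‖))
    (hconc : ∀ x, StrongConcaveOn Y μ (f x)) :
    (∀ x, ∃! y, y ∈ Y ∧ IsMaxOn (f x) Y y) ∧
    (∀ ystar : EuclideanSpace ℝ (Fin m) → EuclideanSpace ℝ (Fin n),
      (∀ x, ystar x ∈ Y ∧ IsMaxOn (f x) Y (ystar x)) →
      ∀ x₁ x₂, ‖ystar x₁ - ystar x₂‖ ≤ (ℓ / μ) * ‖x₁ - x₂‖) := by
  have hYcompact : IsCompact Y := Metric.isCompact_of_isClosed_isBounded hYclosed hYbdd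
  constructor
  · intro x
    have hcont : Continuous (f x) := by
      refine continuous_iff_continuousAt.mpr fun y => ?_
      exact ((hgy x y).differentiableAt).continuousAt
    obtain ⟨y, hyY, hymax⟩ := hYcompact.exists_isMaxOn hYne hcont.continuousOn
    refine ⟨y, ⟨hyY, hymax⟩, ?_⟩
    rintro z ⟨hzY, hzmax⟩
    exact ((hconc x).strictConcaveOn hμ).eq_of_isMaxOn hzmax hymax hzY hyY
  · intro ystar hstar x₁ x₂
    set y₁ := ystar x₁
    set y₂ := ystar x₂
    obtain ⟨hy₁Y, hy₁max⟩ := hstar x₁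
    obtain ⟨hy₂Y, hy₂max⟩ := hstar x₂
    have k1 : f x₁ y₂ + μ / 2 * ‖y₂ - y₁‖ ^ 2 ≤ f x₁ y₁ :=
      strong_max_key hμ (hconc x₁) hy₁Y hy₂Y hy₁max
    have k2 : f x₂ y₁ + μ / 2 * ‖y₁ - y₂‖ ^ 2 ≤ f x₂ y₂ :=
      strong_max_key hμ (hconc x₂) hy₂Y hy₁Y hy₂max
    rw [norm_sub_rev y₂ y₁] at k1
    -- ψ y := f x₁ y - f x₂ y is (ℓ‖x₁-x₂‖)-Lipschitz by MVT
    set ψ : EuclideanSpace ℝ (Fin n) → ℝ := fun y => f x₁ y - f x₂ y with hψ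
    have hmvt : ‖ψ y₁ - ψ y₂‖ ≤ (ℓ * ‖x₁ - x₂‖) * ‖y₁ - y₂‖ := by
      have hderiv : ∀ y ∈ (Set.univ : Set (EuclideanSpace ℝ (Fin n))),
          HasFDerivWithinAt ψ
            ((InnerProductSpace.toDual ℝ _) (gy x₁ y - gy x₂ y)) Set.univ y := by
        intro y _
        have h1 : HasFDerivAt (fun y' => f x₁ y')
            ((InnerProductSpace.toDual ℝ _) (gy x₁ y)) y := hgy x₁ y
        have h2 : HasFDerivAt (fun y' => f x₂ y')
            ((InnerProductSpace.toDual ℝ _) (gy x₂ y)) y := hgy x₂ y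
        have := (h1.sub h2)
        rw [map_sub] at *
        exact this.hasFDerivWithinAt
      have hbound : ∀ y ∈ (Set.univ : Set (EuclideanSpace ℝ (Fin n))),
          ‖(InnerProductSpace.toDual ℝ _) (gy x₁ y - gy x₂ y)‖ ≤ ℓ * ‖x₁ - x₂‖ := by
        intro y _
        rw [(InnerProductSpace.toDual ℝ _).norm_map]
        have := (hsmooth x₁ x₂ y y).2
        simpa using this
      exact convex_univ.norm_image_sub_le_of_norm_hasFDerivWithin_le hderiv hbound
        (Set.mem_univ y₂) (Set.mem_univ y₁)
    have hsum : μ * ‖y₁ - y₂‖ ^ 2 ≤ ψ y₁ - ψ y₂ := by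
      simp only [hψ]; nlinarith
    have hfinal : μ * ‖y₁ - y₂‖ ^ 2 ≤ ℓ * ‖x₁ - x₂‖ * ‖y₁ - y₂‖ :=
      hsum.trans ((le_abs_self _).trans hmvt)
    rcases eq_or_lt_of_le (norm_nonneg (y₁ - y₂)) with h0 | hpos
    · rw [← h0]; positivity
    · rw [div_mul_eq_mul_div, le_div_iff₀ hμ]
      nlinarith
end

section
/- Let f : ℝ^m × ℝ^n → ℝ be ℓ-smooth with f(x,·) μ-strongly concave on a convex bounded set Y, and let Φ(x) = max_{y ∈ Y} f(x,y), y*(x) = argmax_{y∈Y} f(x,y). Then Φ is differentiable with ∇Φ(x) = ∇_x f(x, y*(x)), and ∇Φ is (ℓ + κℓ)-Lipschitz where κ = ℓ/μ. -/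
/-!
Since `f x` is `μ`-strongly concave with maximiser `y*(x)`, it falls off its maximum
quadratically: `f x y + μ/2 ‖y - y*(x)‖² ≤ f x (y*(x))`. Adding this inequality at `x` and `x'`
with the roles of the maximisers swapped, and bounding the difference `f x - f x'` by the mean
value inequality for the `ℓ`-Lipschitz `y`-gradient, gives `μ ‖y*(x) - y*(x')‖ ≤ ℓ ‖x - x'‖`.
Now `Φ(x) = f(x, y*(x))`; for `x'` near `x`, `Φ(x')` is squeezed between `f(x', y*(x))` and
`f(x', y*(x'))`, both of which agree with `Φ(x) + ⟪∇ₓf(x, y*(x)), x' - x⟫` up to `O(‖x' - x‖²)`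
(the second one thanks to the Lipschitz continuity of `y*`). This gives the gradient of `Φ`,
and its Lipschitz constant follows from those of `∇ₓf` and `y*`.
-/

open Set Filter Topology InnerProductSpace
open scoped RealInnerProductSpace NNReal

theorem UniformConcaveOn.add_le_of_isMaxOn {F : Type*} [NormedAddCommGroup F] [NormedSpace ℝ F]
    {s : Set F} {φ : ℝ → ℝ} {g : F → ℝ} (hg : UniformConcaveOn s φ g) {y₀ y : F}
    (hy₀ : y₀ ∈ s) (hmax : IsMaxOn g s y₀) (hy : y ∈ s) : g y + φ ‖y - y₀‖ ≤ g y₀ := by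
  have key : ∀ t ∈ Ioo (0 : ℝ) 1, g y + (1 - t) * φ ‖y - y₀‖ ≤ g y₀ := by
    rintro t ⟨ht₀, ht₁⟩
    have hconc := hg.2 hy hy₀ ht₀.le (sub_nonneg.2 ht₁.le) (add_sub_cancel t 1)
    have hle : g (t • y + (1 - t) • y₀) ≤ g y₀ :=
      hmax (hg.1 hy hy₀ ht₀.le (sub_nonneg.2 ht₁.le) (add_sub_cancel t 1))
    rw [smul_eq_mul, smul_eq_mul] at hconc
    refine le_of_mul_le_mul_left ?_ ht₀
    linear_combination hconc + hle
  have hlim : Tendsto (fun t : ℝ => g y + (1 - t) * φ ‖y - y₀‖) (𝓝[>] 0) (𝓝 (g y + φ ‖y - y₀‖)) :=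
    tendsto_nhdsWithin_of_tendsto_nhds <|
      (continuous_const.add ((continuous_const.sub continuous_id).mul continuous_const)).tendsto'
        0 _ (by simp)
  refine le_of_tendsto hlim ?_
  filter_upwards [Ioo_mem_nhdsGT one_pos] with t ht using key t ht

theorem StrongConcaveOn.mul_norm_sub_le_of_isMaxOn {F : Type*} [NormedAddCommGroup F]
    [InnerProductSpace ℝ F] [CompleteSpace F] {s : Set F} {μ K : ℝ} {g₁ g₂ : F → ℝ}
    {G₁ G₂ : F → F} (hg₁ : StrongConcaveOn s μ g₁) (hg₂ : StrongConcaveOn s μ g₂)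
    (hG₁ : ∀ z, HasGradientAt g₁ (G₁ z) z) (hG₂ : ∀ z, HasGradientAt g₂ (G₂ z) z)
    (hK : ∀ z, ‖G₁ z - G₂ z‖ ≤ K) {y₁ y₂ : F} (hy₁ : y₁ ∈ s) (hmax₁ : IsMaxOn g₁ s y₁)
    (hy₂ : y₂ ∈ s) (hmax₂ : IsMaxOn g₂ s y₂) :
    μ * ‖y₁ - y₂‖ ≤ K := by
  have hgrowth₁ := UniformConcaveOn.add_le_of_isMaxOn hg₁ hy₁ hmax₁ hy₂
  have hgrowth₂ := UniformConcaveOn.add_le_of_isMaxOn hg₂ hy₂ hmax₂ hy₁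
  rw [norm_sub_rev] at hgrowth₁
  have hmv : ‖(g₁ - g₂) y₁ - (g₁ - g₂) y₂‖ ≤ K * ‖y₁ - y₂‖ :=
    convex_univ.norm_image_sub_le_of_norm_hasFDerivWithin_le
      (fun z _ => ((hG₁ z).hasFDerivAt.sub (hG₂ z).hasFDerivAt).hasFDerivWithinAt)
      (fun z _ => by rw [← map_sub, LinearIsometryEquiv.norm_map]; exact hK z)
      (mem_univ y₂) (mem_univ y₁)
  rw [Real.norm_eq_abs, abs_le, Pi.sub_apply, Pi.sub_apply] at hmv
  have hsq : μ * ‖y₁ - y₂‖ ^ 2 ≤ K * ‖y₁ - y₂‖ := by linarith [hmv.2]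
  rcases (norm_nonneg (y₁ - y₂)).eq_or_lt with hd | hd
  · rw [← hd, mul_zero]
    exact (norm_nonneg _).trans (hK y₁)
  · exact le_of_mul_le_mul_right (by rwa [mul_assoc, ← sq]) hd

section

variable {E F : Type*} [NormedAddCommGroup E] [InnerProductSpace ℝ E] [CompleteSpace E]

theorem abs_sub_sub_inner_le_of_norm_gradient_sub_le {h : E → ℝ} {G : E → E} {L : ℝ} {a b : E}
    (hG : ∀ z, HasGradientAt h (G z) z) (hL₀ : 0 ≤ L) (hL : ∀ z, ‖G z - G a‖ ≤ L * ‖z - a‖) :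
    |h b - h a - ⟪G a, b - a⟫| ≤ L * ‖b - a‖ ^ 2 := by
  have hmv := (convex_segment a b).norm_image_sub_le_of_norm_hasFDerivWithin_le'
    (φ := toDual ℝ E (G a)) (C := L * ‖b - a‖)
    (fun z _ => (hG z).hasFDerivAt.hasFDerivWithinAt)
    (fun z hz => by
      rw [← map_sub, LinearIsometryEquiv.norm_map]
      exact (hL z).trans (mul_le_mul_of_nonneg_left (norm_sub_le_of_mem_segment hz) hL₀))
    (left_mem_segment ℝ a b) (right_mem_segment ℝ a b)
  rw [toDual_apply_apply, Real.norm_eq_abs] at hmv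
  linarith

theorem hasGradientAt_of_abs_sub_sub_inner_le {φ : E → ℝ} {g x : E} {C : ℝ}
    (h : ∀ x', |φ x' - φ x - ⟪g, x' - x⟫| ≤ C * ‖x' - x‖ ^ 2) : HasGradientAt φ g x := by
  rw [hasGradientAt_iff_isLittleO_nhds_zero]
  refine Asymptotics.IsBigO.trans_isLittleO (.of_bound C (Eventually.of_forall fun v => ?_))
    (Asymptotics.isLittleO_norm_pow_id one_lt_two)
  simpa using h (x + v)

variable [NormedAddCommGroup F]

theorem hasGradientAt_of_isMaxOn_of_lipschitzWith {f : E → F → ℝ} {gx : E → F → E} {s : Set F}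
    {ystar : E → F} {ℓ : ℝ} {K : ℝ≥0} (hℓ : 0 ≤ ℓ)
    (hgx : ∀ x y, HasGradientAt (fun x' => f x' y) (gx x y) x)
    (hgx_lip : ∀ x x' y y', ‖gx x y - gx x' y'‖ ≤ ℓ * (‖x - x'‖ + ‖y - y'‖))
    (hmax : ∀ x, ystar x ∈ s ∧ IsMaxOn (f x) s (ystar x)) (hK : LipschitzWith K ystar)
    (x : E) : HasGradientAt (fun x => f x (ystar x)) (gx x (ystar x)) x := by
  refine hasGradientAt_of_abs_sub_sub_inner_le (C := ℓ + ℓ * K) fun x' => ?_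
  set g := gx x (ystar x)
  have descent (y : F) : |f x' y - f x y - ⟪gx x y, x' - x⟫| ≤ ℓ * ‖x' - x‖ ^ 2 :=
    abs_sub_sub_inner_le_of_norm_gradient_sub_le (fun z => hgx z y) hℓ fun z => by
      simpa using hgx_lip z x y y
  have hgap : ⟪gx x (ystar x') - g, x' - x⟫ ≤ ℓ * K * ‖x' - x‖ ^ 2 := by
    have hgx_y := hgx_lip x x (ystar x') (ystar x)
    rw [sub_self, norm_zero, zero_add] at hgx_y
    calc ⟪gx x (ystar x') - g, x' - x⟫ ≤ ‖gx x (ystar x') - g‖ * ‖x' - x‖ := real_inner_le_norm _ _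
      _ ≤ ℓ * (K * ‖x' - x‖) * ‖x' - x‖ := by
        gcongr
        exact hgx_y.trans (mul_le_mul_of_nonneg_left (hK.norm_sub_le x' x) hℓ)
      _ = ℓ * K * ‖x' - x‖ ^ 2 := by ring
  have hlower := (abs_le.1 (descent (ystar x))).1
  have hupper := (abs_le.1 (descent (ystar x'))).2
  have hmax_x' : f x' (ystar x) ≤ f x' (ystar x') := (hmax x').2 (hmax x).1
  have hmax_x : f x (ystar x') ≤ f x (ystar x) := (hmax x).2 (hmax x').1
  rw [inner_sub_left] at hgap
  have : 0 ≤ ℓ * K * ‖x' - x‖ ^ 2 := by positivity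
  rw [abs_le]
  constructor <;> linarith

end

theorem statement1_general {m n : ℕ} (f : EuclideanSpace ℝ (Fin m) → EuclideanSpace ℝ (Fin n) → ℝ)
    (ℓ μ : ℝ) (hℓ : 0 < ℓ) (hμ : 0 < μ)
    (Y : Set (EuclideanSpace ℝ (Fin n)))
    (gx : EuclideanSpace ℝ (Fin m) → EuclideanSpace ℝ (Fin n) → EuclideanSpace ℝ (Fin m))
    (gy : EuclideanSpace ℝ (Fin m) → EuclideanSpace ℝ (Fin n) → EuclideanSpace ℝ (Fin n))
    (hgx : ∀ x y, HasGradientAt (fun x' => f x' y) (gx x y) x)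
    (hgy : ∀ x y, HasGradientAt (fun y' => f x y') (gy x y) y)
    (hsmooth : ∀ x x' y y',
      ‖gx x y - gx x' y'‖ ≤ ℓ * (‖x - x'‖ + ‖y - y'‖) ∧
      ‖gy x y - gy x' y'‖ ≤ ℓ * (‖x - x'‖ + ‖y - y'‖))
    (hconc : ∀ x, StrongConcaveOn Y μ (f x))
    (Φ : EuclideanSpace ℝ (Fin m) → ℝ) (hΦ : ∀ x, Φ x = sSup (f x '' Y))
    (ystar : EuclideanSpace ℝ (Fin m) → EuclideanSpace ℝ (Fin n))
    (hystar : ∀ x, ystar x ∈ Y ∧ IsMaxOn (f x) Y (ystar x)) :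
    (∀ x, HasGradientAt Φ (gx x (ystar x)) x) ∧
    (∀ x x', ‖gx x (ystar x) - gx x' (ystar x')‖ ≤ (ℓ + (ℓ / μ) * ℓ) * ‖x - x'‖) := by
  have hΦ_eq : Φ = fun x => f x (ystar x) := funext fun x =>
    (hΦ x).trans (IsGreatest.csSup_eq ⟨mem_image_of_mem _ (hystar x).1,
      forall_mem_image.2 fun _ hy => (hystar x).2 hy⟩)
  have hystar_lip : LipschitzWith ⟨ℓ / μ, by positivity⟩ ystar := by
    refine LipschitzWith.of_dist_le_mul fun x x' => show _ ≤ ℓ / μ * _ from ?_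
    rw [dist_eq_norm, dist_eq_norm, div_mul_eq_mul_div, le_div_iff₀ hμ, mul_comm]
    exact (hconc x).mul_norm_sub_le_of_isMaxOn (hconc x') (hgy x) (hgy x')
      (fun z => by simpa using (hsmooth x x' z z).2)
      (hystar x).1 (hystar x).2 (hystar x').1 (hystar x').2
  refine ⟨fun x => hΦ_eq ▸ hasGradientAt_of_isMaxOn_of_lipschitzWith hℓ.le hgx
    (fun x x' y y' => (hsmooth x x' y y').1) hystar hystar_lip x, fun x x' => ?_⟩
  calc ‖gx x (ystar x) - gx x' (ystar x')‖ ≤ ℓ * (‖x - x'‖ + ‖ystar x - ystar x'‖) :=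
        (hsmooth x x' (ystar x) (ystar x')).1
    _ ≤ ℓ * (‖x - x'‖ + ℓ / μ * ‖x - x'‖) := by
        gcongr
        exact hystar_lip.norm_sub_le x x'
    _ = (ℓ + ℓ / μ * ℓ) * ‖x - x'‖ := by ring

/-- In the nonconvex-strongly-concave setting, `Φ(x) = max_{y∈Y} f x y`
is differentiable with `∇Φ(x) = ∇_x f(x, y*(x))`, and `∇Φ` is `(ℓ + κℓ)`-Lipschitz
with `κ = ℓ/μ`. -/
theorem statement1 {m n : ℕ} (f : EuclideanSpace ℝ (Fin m) → EuclideanSpace ℝ (Fin n) → ℝ)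
    (ℓ μ : ℝ) (hℓ : 0 < ℓ) (hμ : 0 < μ)
    (Y : Set (EuclideanSpace ℝ (Fin n))) (hYconv : Convex ℝ Y) (hYcomp : IsCompact Y)
    (hYne : Y.Nonempty)
    (gx : EuclideanSpace ℝ (Fin m) → EuclideanSpace ℝ (Fin n) → EuclideanSpace ℝ (Fin m))
    (gy : EuclideanSpace ℝ (Fin m) → EuclideanSpace ℝ (Fin n) → EuclideanSpace ℝ (Fin n))
    (hgx : ∀ x y, HasGradientAt (fun x' => f x' y) (gx x y) x)
    (hgy : ∀ x y, HasGradientAt (fun y' => f x y') (gy x y) y)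
    (hsmooth : ∀ x x' y y',
      ‖gx x y - gx x' y'‖ ≤ ℓ * (‖x - x'‖ + ‖y - y'‖) ∧
      ‖gy x y - gy x' y'‖ ≤ ℓ * (‖x - x'‖ + ‖y - y'‖))
    (hconc : ∀ x, StrongConcaveOn Y μ (f x))
    (Φ : EuclideanSpace ℝ (Fin m) → ℝ) (hΦ : ∀ x, Φ x = sSup (f x '' Y))
    (ystar : EuclideanSpace ℝ (Fin m) → EuclideanSpace ℝ (Fin n))
    (hystar : ∀ x, ystar x ∈ Y ∧ IsMaxOn (f x) Y (ystar x)) :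
    (∀ x, HasGradientAt Φ (gx x (ystar x)) x) ∧
    (∀ x x', ‖gx x (ystar x) - gx x' (ystar x')‖ ≤ (ℓ + (ℓ / μ) * ℓ) * ‖x - x'‖) :=
  statement1_general f ℓ μ hℓ hμ Y gx gy hgx hgy hsmooth hconc Φ hΦ ystar hystar
end

section
/- Let f : ℝ^m × ℝ^n → ℝ be ℓ-smooth with f(x,·) concave on a convex compact set Y for each x, and f(·,y) L-Lipschitz for each y ∈ Y. Then Φ(x) = max_{y∈Y} f(x,y) is ℓ-weakly convex (i.e., Φ + (ℓ/2)‖·‖² is convex) and L-Lipschitz, and for any maximizer y*(x) ∈ argmax_{y∈Y} f(x,y), ∇_x f(x, y*(x)) is a subgradient of Φ + (ℓ/2)‖·‖² minus ℓx, i.e., ∇_x f(x, y*(x)) ∈ ∂Φ(x). -/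
open Set
open scoped RealInnerProductSpace

/-!
Since `∇ₓ f(·, y)` is `ℓ`-Lipschitz, adding `ℓ/2 ‖x‖²` makes it a monotone gradient, so every
`f(·, y) + ℓ/2 ‖·‖²` is convex and lies above its tangent planes. Their pointwise supremum over the
compact set `Y` is `Φ + ℓ/2 ‖·‖²`, which is therefore convex, and the `L`-Lipschitz bound passes to
the supremum in the same way. At `x` the supremum is attained at any maximizer `y*`, so the tangent
plane of `f(·, y*) + ℓ/2 ‖·‖²` at `x`, which lies below that function and hence below the
supremum, touches it at `x`: this is the subgradient inequality.
-/

section Gradient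

variable {E : Type*} [NormedAddCommGroup E] [InnerProductSpace ℝ E]

theorem inner_add_smul_sub_add_smul_nonneg {u v a b : E} {ℓ : ℝ} (h : ‖u - v‖ ≤ ℓ * ‖a - b‖) :
    0 ≤ ⟪(u + ℓ • a) - (v + ℓ • b), a - b⟫ := by
  have hsplit : (u + ℓ • a) - (v + ℓ • b) = (u - v) + ℓ • (a - b) := by module
  rw [hsplit, inner_add_left, real_inner_smul_left, real_inner_self_eq_norm_sq]
  have hcs := neg_le_of_abs_le (abs_real_inner_le_norm (u - v) (a - b))
  nlinarith [norm_nonneg (a - b)]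

variable [CompleteSpace E] {g : E → ℝ}

theorem HasGradientAt.hasDerivAt_comp_add_smul {G a v : E} {t : ℝ}
    (hg : HasGradientAt g G (a + t • v)) :
    HasDerivAt (fun s : ℝ => g (a + s • v)) ⟪G, v⟫ t := by
  have hline : HasDerivAt (fun s : ℝ => a + s • v) v t := by
    simpa using ((hasDerivAt_id t).smul_const v).const_add a
  simpa [InnerProductSpace.toDual_apply_apply, Function.comp_def] using
    (hasGradientAt_iff_hasFDerivAt.mp hg).comp_hasDerivAt t hline

theorem hasGradientAt_add_half_mul_norm_sq {G x : E} (hg : HasGradientAt g G x) (c : ℝ) :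
    HasGradientAt (fun z => g z + c / 2 * ‖z‖ ^ 2) (G + c • x) x := by
  rw [hasGradientAt_iff_hasFDerivAt] at hg ⊢
  refine (hg.add ((hasStrictFDerivAt_norm_sq x).hasFDerivAt.const_mul (c / 2))).congr_fderiv ?_
  ext v
  simp only [map_add, map_smul, add_apply, smul_apply, InnerProductSpace.toDual_apply_apply,
    coe_innerSL_apply]
  module

theorem convexOn_univ_of_forall_convexOn_line {F : Type*} [AddCommGroup F] [Module ℝ F]
    {φ : F → ℝ} (hline : ∀ a b : F, ConvexOn ℝ univ (fun s : ℝ => φ (a + s • (b - a)))) :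
    ConvexOn ℝ univ φ := by
  refine ⟨convex_univ, fun a _ b _ p q hp hq hpq => ?_⟩
  have h := (hline a b).2 (mem_univ 0) (mem_univ 1) hp hq hpq
  have hcomb : a + q • (b - a) = p • a + q • b := by
    obtain rfl : p = 1 - q := by linarith
    module
  simpa [hcomb] using h

theorem convexOn_univ_of_inner_gradient_sub_nonneg {G : E → E}
    (hg : ∀ x, HasGradientAt g (G x) x) (hmono : ∀ a b, 0 ≤ ⟪G a - G b, a - b⟫) :
    ConvexOn ℝ univ g := by
  refine convexOn_univ_of_forall_convexOn_line fun a b => ?_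
  have hderiv (t : ℝ) := (hg (a + t • (b - a))).hasDerivAt_comp_add_smul
  refine Monotone.convexOn_univ_of_deriv (fun t => (hderiv t).differentiableAt) fun s t hst => ?_
  simp only [(hderiv s).deriv, (hderiv t).deriv]
  have h := hmono (a + t • (b - a)) (a + s • (b - a))
  rw [show a + t • (b - a) - (a + s • (b - a)) = (t - s) • (b - a) by module,
    real_inner_smul_right, inner_sub_left] at h
  rcases hst.eq_or_lt with rfl | hlt
  · rfl
  · nlinarith

theorem ConvexOn.add_inner_gradient_le {G x : E} (hconv : ConvexOn ℝ univ g)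
    (hg : HasGradientAt g G x) (x' : E) : g x + ⟪G, x' - x⟫ ≤ g x' := by
  have hline : ConvexOn ℝ univ (fun s : ℝ => g (x + s • (x' - x))) := by
    simpa [Function.comp_def, AffineMap.lineMap_apply_module', add_comm] using
      hconv.comp_affineMap (AffineMap.lineMap x x')
  have hderiv : HasDerivAt (fun s : ℝ => g (x + s • (x' - x))) ⟪G, x' - x⟫ 0 :=
    (by simpa using hg : HasGradientAt g G (x + (0 : ℝ) • (x' - x))).hasDerivAt_comp_add_smul
  have hslope := hline.le_slope_of_hasDerivAt (mem_univ 0) (mem_univ 1) one_pos hderiv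
  simp only [slope_def_field, one_smul, add_sub_cancel, zero_smul, add_zero, sub_zero,
    div_one] at hslope
  linarith

theorem convexOn_univ_add_half_mul_norm_sq_of_lipschitz_gradient {G : E → E} {ℓ : ℝ}
    (hg : ∀ x, HasGradientAt g (G x) x) (hG : ∀ a b, ‖G a - G b‖ ≤ ℓ * ‖a - b‖) :
    ConvexOn ℝ univ (fun x => g x + ℓ / 2 * ‖x‖ ^ 2) :=
  convexOn_univ_of_inner_gradient_sub_nonneg (fun x => hasGradientAt_add_half_mul_norm_sq (hg x) ℓ)
    fun a b => inner_add_smul_sub_add_smul_nonneg (hG a b)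

end Gradient

section Supremum

variable {ι : Type*} {s : Set ι}

theorem IsMaxOn.csSup_image_eq {g : ι → ℝ} {i : ι} (h : IsMaxOn g s i) (hi : i ∈ s) :
    sSup (g '' s) = g i := by
  rw [sSup_image', h.iSup_eq hi]

theorem csSup_image_add_const {g : ι → ℝ} (hs : s.Nonempty) (hbdd : BddAbove (g '' s)) (c : ℝ) :
    sSup ((fun i => g i + c) '' s) = sSup (g '' s) + c := by
  simpa [image_image] using ((OrderIso.addRight c).map_csSup' (hs.image g) hbdd).symm

theorem convexOn_csSup_image {E : Type*} [AddCommGroup E] [Module ℝ E] {D : Set E}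
    {F : E → ι → ℝ} (hs : s.Nonempty) (hbdd : ∀ x ∈ D, BddAbove (F x '' s))
    (hF : ∀ i ∈ s, ConvexOn ℝ D (F · i)) : ConvexOn ℝ D (fun x => sSup (F x '' s)) := by
  obtain ⟨i₀, hi₀⟩ := hs
  refine ⟨(hF i₀ hi₀).1, fun a ha b hb p q hp hq hpq => ?_⟩
  refine csSup_le ((nonempty_of_mem hi₀).image _) ?_
  rintro _ ⟨i, hi, rfl⟩
  calc F (p • a + q • b) i ≤ p • F a i + q • F b i := (hF i hi).2 ha hb hp hq hpq
    _ ≤ p • sSup (F a '' s) + q • sSup (F b '' s) := by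
      gcongr
      · exact le_csSup (hbdd a ha) (mem_image_of_mem _ hi)
      · exact le_csSup (hbdd b hb) (mem_image_of_mem _ hi)

theorem csSup_image_le_csSup_image_add {X : Type*} [PseudoMetricSpace X] {F : X → ι → ℝ}
    {L : ℝ} (hs : s.Nonempty) (hbdd : ∀ x, BddAbove (F x '' s))
    (hF : ∀ i ∈ s, ∀ x x', |F x i - F x' i| ≤ L * dist x x') (x x' : X) :
    sSup (F x '' s) ≤ sSup (F x' '' s) + L * dist x x' := by
  refine csSup_le (hs.image _) ?_
  rintro _ ⟨i, hi, rfl⟩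
  have hle := le_csSup (hbdd x') (mem_image_of_mem _ hi)
  linarith [le_of_abs_le (hF i hi x x')]

theorem abs_csSup_image_sub_le {X : Type*} [PseudoMetricSpace X] {F : X → ι → ℝ}
    {L : ℝ} (hs : s.Nonempty) (hbdd : ∀ x, BddAbove (F x '' s))
    (hF : ∀ i ∈ s, ∀ x x', |F x i - F x' i| ≤ L * dist x x') (x x' : X) :
    |sSup (F x '' s) - sSup (F x' '' s)| ≤ L * dist x x' := by
  rw [abs_sub_le_iff]
  constructor
  · linarith [csSup_image_le_csSup_image_add hs hbdd hF x x']
  · linarith [dist_comm x x' ▸ csSup_image_le_csSup_image_add hs hbdd hF x' x]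

end Supremum

theorem statement2_general {m n : ℕ} (f : EuclideanSpace ℝ (Fin m) → EuclideanSpace ℝ (Fin n) → ℝ)
    (ℓ L : ℝ)
    (Y : Set (EuclideanSpace ℝ (Fin n))) (hYcomp : IsCompact Y)
    (hYne : Y.Nonempty)
    (gx : EuclideanSpace ℝ (Fin m) → EuclideanSpace ℝ (Fin n) → EuclideanSpace ℝ (Fin m))
    (gy : EuclideanSpace ℝ (Fin m) → EuclideanSpace ℝ (Fin n) → EuclideanSpace ℝ (Fin n))
    (hgx : ∀ x y, HasGradientAt (fun x' => f x' y) (gx x y) x)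
    (hgy : ∀ x y, HasGradientAt (fun y' => f x y') (gy x y) y)
    (hsmooth : ∀ x x' y y',
      ‖gx x y - gx x' y'‖ ≤ ℓ * (‖x - x'‖ + ‖y - y'‖) ∧
      ‖gy x y - gy x' y'‖ ≤ ℓ * (‖x - x'‖ + ‖y - y'‖))
    (hLip : ∀ y ∈ Y, ∀ x x', |f x y - f x' y| ≤ L * ‖x - x'‖)
    (Φ : EuclideanSpace ℝ (Fin m) → ℝ) (hΦ : ∀ x, Φ x = sSup (f x '' Y)) :
    (ConvexOn ℝ univ (fun x => Φ x + ℓ / 2 * ‖x‖ ^ 2)) ∧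
    (∀ x x', |Φ x - Φ x'| ≤ L * ‖x - x'‖) ∧
    (∀ x, ∀ ys ∈ Y, IsMaxOn (f x) Y ys →
      ∀ x', Φ x' + ℓ / 2 * ‖x'‖ ^ 2 ≥
        Φ x + ℓ / 2 * ‖x‖ ^ 2 + ⟪gx x ys + ℓ • x, x' - x⟫) := by
  have hcont (x) : Continuous (f x) :=
    continuous_iff_continuousAt.2 fun y => (hgy x y).differentiableAt.continuousAt
  have hbdd (x) : BddAbove (f x '' Y) := (hYcomp.image (hcont x)).bddAbove
  have hweak (y) : ConvexOn ℝ univ (fun x => f x y + ℓ / 2 * ‖x‖ ^ 2) :=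
    convexOn_univ_add_half_mul_norm_sq_of_lipschitz_gradient (hgx · y)
      fun a b => by simpa using (hsmooth a b y y).1
  refine ⟨?_, fun x x' => ?_, fun x ys hys hmax x' => ?_⟩
  · have hbdd' (x) : BddAbove ((fun y => f x y + ℓ / 2 * ‖x‖ ^ 2) '' Y) :=
      (hYcomp.image ((hcont x).add continuous_const)).bddAbove
    simpa only [csSup_image_add_const hYne (hbdd _), ← hΦ] using
      convexOn_csSup_image hYne (fun x _ => hbdd' x) fun y _ => hweak y
  · simpa only [hΦ, dist_eq_norm] using
      abs_csSup_image_sub_le hYne hbdd (by simpa only [dist_eq_norm] using hLip) x x'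
  · have htangent := (hweak ys).add_inner_gradient_le
      (hasGradientAt_add_half_mul_norm_sq (hgx x ys) ℓ) x'
    have hle : f x' ys ≤ Φ x' := hΦ x' ▸ le_csSup (hbdd x') (mem_image_of_mem _ hys)
    rw [hΦ x, hmax.csSup_image_eq hys]
    linarith

/-- In the nonconvex-concave setting, `Φ(x) = max_{y∈Y} f x y` is
ℓ-weakly convex (`Φ + (ℓ/2)‖·‖²` is convex) and L-Lipschitz, and for any maximizer
`y*(x)`, `∇_x f(x, y*(x)) ∈ ∂Φ(x)`, i.e. it is a subgradient of `Φ + (ℓ/2)‖·‖²`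
at `x` minus `ℓ x`. -/
theorem statement2 {m n : ℕ} (f : EuclideanSpace ℝ (Fin m) → EuclideanSpace ℝ (Fin n) → ℝ)
    (ℓ L : ℝ) (hℓ : 0 < ℓ) (hL : 0 < L)
    (Y : Set (EuclideanSpace ℝ (Fin n))) (hYconv : Convex ℝ Y) (hYcomp : IsCompact Y)
    (hYne : Y.Nonempty)
    (gx : EuclideanSpace ℝ (Fin m) → EuclideanSpace ℝ (Fin n) → EuclideanSpace ℝ (Fin m))
    (gy : EuclideanSpace ℝ (Fin m) → EuclideanSpace ℝ (Fin n) → EuclideanSpace ℝ (Fin n))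
    (hgx : ∀ x y, HasGradientAt (fun x' => f x' y) (gx x y) x)
    (hgy : ∀ x y, HasGradientAt (fun y' => f x y') (gy x y) y)
    (hsmooth : ∀ x x' y y',
      ‖gx x y - gx x' y'‖ ≤ ℓ * (‖x - x'‖ + ‖y - y'‖) ∧
      ‖gy x y - gy x' y'‖ ≤ ℓ * (‖x - x'‖ + ‖y - y'‖))
    (hconc : ∀ x, ConcaveOn ℝ Y (f x))
    (hLip : ∀ y ∈ Y, ∀ x x', |f x y - f x' y| ≤ L * ‖x - x'‖)
    (Φ : EuclideanSpace ℝ (Fin m) → ℝ) (hΦ : ∀ x, Φ x = sSup (f x '' Y)) :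
    (ConvexOn ℝ univ (fun x => Φ x + ℓ / 2 * ‖x‖ ^ 2)) ∧
    (∀ x x', |Φ x - Φ x'| ≤ L * ‖x - x'‖) ∧
    (∀ x, ∀ ys ∈ Y, IsMaxOn (f x) Y ys →
      ∀ x', Φ x' + ℓ / 2 * ‖x'‖ ^ 2 ≥
        Φ x + ℓ / 2 * ‖x‖ ^ 2 + ⟪gx x ys + ℓ • x, x' - x⟫) :=
  statement2_general f ℓ L Y hYcomp hYne gx gy hgx hgy hsmooth hLip Φ hΦ
end

section
/- Under the GDA updates x_t = x_{t−1} − η_x ∇_x f(x_{t−1}, y_{t−1}) and y_t = P_Y(y_{t−1} + (1/ℓ)∇_y f(x_{t−1}, y_{t−1})), with f ℓ-smooth and f(x,·) μ-strongly concave on convex Y, κ = ℓ/μ ≥ 2, letting δ_t = ‖y*(x_t) − y_t‖² and Φ(x) = max_{y∈Y} f(x,y), one has δ_t ≤ (1 − 1/(2κ) + 4κ³ℓ²η_x²) δ_{t−1} + 4κ³η_x² ‖∇Φ(x_{t−1})‖². -/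
open Set
open scoped RealInnerProductSpace

/-!
With stepsize `1/ℓ`, one projected gradient-ascent step on the `μ`-strongly concave `f (x_t, ·)`
contracts the squared distance to its maximiser `y*(x_t)` by the factor `1 - 1/κ` (descent lemma,
strong concavity and the obtuse-angle property of the projection). Meanwhile the maximiser drifts
by `‖y*(x_{t+1}) - y*(x_t)‖ ≤ κ ‖x_{t+1} - x_t‖ = κ η_x ‖∇_x f(x_t, y_t)‖`, and
`‖∇_x f(x_t, y_t)‖ ≤ ‖∇Φ(x_t)‖ + ℓ ‖y*(x_t) - y_t‖`. Young's inequality with weight `2κ - 1`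
merges contraction and drift, weakening the factor to `1 - 1/(2κ)` at the cost of `2κ` on the drift.
-/

theorem ConcaveOn.le_add_fderiv {E : Type*} [NormedAddCommGroup E] [NormedSpace ℝ E]
    {s : Set E} {h : E → ℝ} {h' : StrongDual ℝ E} {a z : E}
    (hh : ConcaveOn ℝ s h) (hd : HasFDerivAt h h' a) (ha : a ∈ s) (hz : z ∈ s) :
    h z ≤ h a + h' (z - a) := by
  set γ : ℝ →ᵃ[ℝ] E := AffineMap.lineMap a z
  have hline : ConcaveOn ℝ (γ ⁻¹' s) (h ∘ γ) := hh.comp_affineMap γ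
  have hd₀ : HasFDerivAt h h' (γ 0) := by simpa [γ] using hd
  have hderiv : HasDerivAt (h ∘ γ) (h' (z - a)) 0 :=
    hd₀.comp_hasDerivAt 0 AffineMap.hasDerivAt_lineMap
  have := hline.slope_le_of_hasDerivAt (by simpa [γ] using ha) (by simpa [γ] using hz) one_pos
    hderiv
  simp only [slope_def_field, Function.comp_apply, γ, AffineMap.lineMap_apply_zero,
    AffineMap.lineMap_apply_one, sub_zero, div_one] at this
  linarith

section InnerProductSpace

variable {E : Type*} [NormedAddCommGroup E] [InnerProductSpace ℝ E] [CompleteSpace E]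

theorem StrongConcaveOn.add_sq_le_add_inner {s : Set E} {μ : ℝ} {f : E → ℝ} {G a z : E}
    (hf : StrongConcaveOn s μ f) (hG : HasGradientAt f G a) (ha : a ∈ s) (hz : z ∈ s) :
    f z + μ / 2 * ‖z - a‖ ^ 2 ≤ f a + ⟪G, z - a⟫ := by
  have hd : HasFDerivAt (fun x ↦ f x + μ / 2 * ‖x‖ ^ 2)
      (InnerProductSpace.toDual ℝ E G + (μ / 2) • (2 • innerSL ℝ a)) a :=
    hG.hasFDerivAt.add ((hasStrictFDerivAt_norm_sq a).hasFDerivAt.const_mul (μ / 2))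
  have := (strongConcaveOn_iff_convex.1 hf).le_add_fderiv hd ha hz
  simp only [add_apply, InnerProductSpace.toDual_apply_apply,
    smul_apply, innerSL_apply_apply, nsmul_eq_mul, Nat.cast_ofNat,
    smul_eq_mul] at this
  have hexpand : ⟪a, z - a⟫ = ⟪z, a⟫ - ‖a‖ ^ 2 := by
    rw [inner_sub_right, real_inner_self_eq_norm_sq, real_inner_comm]
  rw [hexpand] at this
  rw [norm_sub_sq_real]
  linarith

theorem IsMaxOn.inner_gradient_nonpos {s : Set E} {f : E → ℝ} {G a z : E}
    (hs : Convex ℝ s) (hmax : IsMaxOn f s a) (hG : HasGradientAt f G a) (ha : a ∈ s)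
    (hz : z ∈ s) : ⟪G, z - a⟫ ≤ 0 := by
  simpa [InnerProductSpace.toDual_apply_apply] using hmax.localize.hasFDerivWithinAt_nonpos
    hG.hasFDerivAt.hasFDerivWithinAt
    (sub_mem_posTangentConeAt_of_segment_subset (hs.segment_subset ha hz))

theorem add_inner_sub_sq_le_of_lipschitz_gradient {f : E → ℝ} {g : E → E} {L : ℝ}
    (hg : ∀ p, HasGradientAt f (g p) p) (hlip : ∀ p q, ‖g p - g q‖ ≤ L * ‖p - q‖) (a b : E) :
    f a + ⟪g a, b - a⟫ - L / 2 * ‖b - a‖ ^ 2 ≤ f b := by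
  set d := b - a
  let φ : ℝ → ℝ := fun t ↦ f (a + t • d) - t * ⟪g a, d⟫ + L / 2 * ‖d‖ ^ 2 * t ^ 2
  have hφ : ∀ t, HasDerivAt φ (⟪g (a + t • d) - g a, d⟫ + L * ‖d‖ ^ 2 * t) t := by
    intro t
    have hline : HasDerivAt (fun s : ℝ ↦ a + s • d) d t := by
      simpa using ((hasDerivAt_id t).smul_const d).const_add a
    have hf : HasDerivAt (fun s : ℝ ↦ f (a + s • d)) ⟪g (a + t • d), d⟫ t := by
      simpa [Function.comp_def, InnerProductSpace.toDual_apply_apply] using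
        (hg _).hasFDerivAt.comp_hasDerivAt t hline
    have hlin : HasDerivAt (fun s : ℝ ↦ s * ⟪g a, d⟫) ⟪g a, d⟫ t := by
      simpa using (hasDerivAt_id t).mul_const ⟪g a, d⟫
    have hquad :
        HasDerivAt (fun s : ℝ ↦ L / 2 * ‖d‖ ^ 2 * s ^ 2) (L / 2 * ‖d‖ ^ 2 * (2 * t)) t := by
      simpa using (hasDerivAt_pow 2 t).const_mul (L / 2 * ‖d‖ ^ 2)
    exact ((hf.sub hlin).add hquad).congr_deriv (by rw [inner_sub_left]; ring)
  have hmono : MonotoneOn φ (Ici 0) := by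
    refine monotoneOn_of_hasDerivWithinAt_nonneg (convex_Ici 0)
      (fun t _ ↦ (hφ t).continuousAt.continuousWithinAt) (fun t _ ↦ (hφ t).hasDerivWithinAt) ?_
    intro t ht
    rw [interior_Ici, mem_Ioi] at ht
    have hclose : ‖g (a + t • d) - g a‖ ≤ L * (t * ‖d‖) := by
      simpa [norm_smul, abs_of_pos ht] using hlip (a + t • d) a
    nlinarith [neg_le_of_abs_le (abs_real_inner_le_norm (g (a + t • d) - g a) d),
      mul_le_mul_of_nonneg_right hclose (norm_nonneg d)]
  have := hmono (mem_Ici.2 le_rfl) (zero_le_one' ℝ) zero_le_one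
  simp only [φ, zero_smul, add_zero, zero_mul, sub_zero, one_smul, one_mul, one_pow, mul_one,
    ne_eq, OfNat.ofNat_ne_zero, not_false_eq_true, zero_pow, mul_zero, add_sub_cancel, d] at this
  linarith

theorem StrongConcaveOn.sq_norm_sub_le_of_projected_gradient_step {s : Set E} {μ ℓ : ℝ}
    {f : E → ℝ} {g : E → E} {u w q : E} (hℓ : 0 < ℓ) (hf : StrongConcaveOn s μ f)
    (hg : ∀ p, HasGradientAt f (g p) p) (hlip : ∀ p q, ‖g p - g q‖ ≤ ℓ * ‖p - q‖)
    (hmax : IsMaxOn f s u) (hu : u ∈ s) (hw : w ∈ s) (hq : q ∈ s)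
    (hproj : ∀ z ∈ s, ⟪w + (1 / ℓ) • g w - q, z - q⟫ ≤ 0) :
    ‖u - q‖ ^ 2 ≤ (1 - μ / ℓ) * ‖u - w‖ ^ 2 := by
  have hdescent := add_inner_sub_sq_le_of_lipschitz_gradient hg hlip w q
  have hstrong := hf.add_sq_le_add_inner (hg w) hw hu
  have hqu : f q ≤ f u := hmax hq
  have hvi : ⟪g w, u - q⟫ ≤ ℓ * ⟪q - w, u - q⟫ := by
    have := hproj u hu
    rw [show w + (1 / ℓ) • g w - q = (1 / ℓ) • (g w - ℓ • (q - w)) by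
      rw [smul_sub, smul_smul, one_div_mul_cancel hℓ.ne', one_smul]; abel,
      real_inner_smul_left, inner_sub_left, real_inner_smul_left] at this
    exact sub_nonpos.1 (nonpos_of_mul_nonpos_right this (one_div_pos.2 hℓ))
  have hsplit : ⟪g w, u - w⟫ - ⟪g w, q - w⟫ = ⟪g w, u - q⟫ := by
    rw [← inner_sub_right, sub_sub_sub_cancel_right]
  have hpolar : ‖u - w‖ ^ 2 = ‖u - q‖ ^ 2 + 2 * ⟪u - q, q - w⟫ + ‖q - w‖ ^ 2 := by
    rw [← norm_add_sq_real, sub_add_sub_cancel]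
  have key : ℓ * ‖u - q‖ ^ 2 ≤ (ℓ - μ) * ‖u - w‖ ^ 2 := by
    rw [real_inner_comm] at hpolar
    nlinarith
  rwa [one_sub_div hℓ.ne', div_mul_eq_mul_div, le_div_iff₀' hℓ]

theorem StrongConcaveOn.mul_norm_sub_le_of_isMaxOn_s9 {s : Set E} {μ : ℝ} {f₁ f₂ : E → ℝ}
    {u v G₁u G₁v G₂v : E} (hs : Convex ℝ s) (hf₁ : StrongConcaveOn s μ f₁)
    (hmax₁ : IsMaxOn f₁ s u) (hmax₂ : IsMaxOn f₂ s v) (hu : u ∈ s) (hv : v ∈ s)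
    (hG₁u : HasGradientAt f₁ G₁u u) (hG₁v : HasGradientAt f₁ G₁v v)
    (hG₂v : HasGradientAt f₂ G₂v v) :
    μ * ‖v - u‖ ≤ ‖G₁v - G₂v‖ := by
  have h₁ := hf₁.add_sq_le_add_inner hG₁u hu hv
  have h₂ := hf₁.add_sq_le_add_inner hG₁v hv hu
  have hvi₁ := hmax₁.inner_gradient_nonpos hs hG₁u hu hv
  have hvi₂ := hmax₂.inner_gradient_nonpos hs hG₂v hv hu
  have hcs : ⟪G₁v - G₂v, u - v⟫ ≤ ‖G₁v - G₂v‖ * ‖v - u‖ :=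
    (real_inner_le_norm _ _).trans_eq (by rw [norm_sub_rev u v])
  have hsq : (μ * ‖v - u‖) * ‖v - u‖ ≤ ‖G₁v - G₂v‖ * ‖v - u‖ := by
    rw [norm_sub_rev u v] at h₂
    rw [inner_sub_left] at hcs
    linarith
  rcases (norm_nonneg (v - u)).eq_or_lt with h | h
  · rw [← h, mul_zero]
    exact norm_nonneg _
  · exact le_of_mul_le_mul_right hsq h

end InnerProductSpace

theorem add_sq_le_of_sq_le_one_sub_inv {A B D κ : ℝ} (hκ : 1 < 2 * κ)
    (hB : B ^ 2 ≤ (1 - 1 / κ) * D ^ 2) :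
    (A + B) ^ 2 ≤ (1 - 1 / (2 * κ)) * D ^ 2 + 2 * κ * A ^ 2 := by
  have hκ₀ : 0 < κ := by linarith
  have hB' : κ * B ^ 2 ≤ (κ - 1) * D ^ 2 := by
    have := mul_le_mul_of_nonneg_left hB hκ₀.le
    rwa [← mul_assoc, mul_sub, mul_one, mul_one_div_cancel hκ₀.ne'] at this
  have hsplit : (1 - 1 / (2 * κ)) * D ^ 2 + 2 * κ * A ^ 2 - (A + B) ^ 2
      = (2 * ((κ - 1) * D ^ 2 - κ * B ^ 2) + D ^ 2 / (2 * κ) + (B - (2 * κ - 1) * A) ^ 2)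
        / (2 * κ - 1) := by
    have : 2 * κ - 1 ≠ 0 := by linarith
    field_simp
    ring
  rw [← sub_nonneg, hsplit]
  apply div_nonneg _ (by linarith)
  have : 0 ≤ D ^ 2 / (2 * κ) := by positivity
  nlinarith [sq_nonneg (B - (2 * κ - 1) * A)]

theorem add_sq_le_of_contraction_of_drift {A B D G g₀ κ ℓ η : ℝ} (hκ : 1 < 2 * κ)
    (hB : B ^ 2 ≤ (1 - 1 / κ) * D ^ 2) (hA₀ : 0 ≤ A) (hA : A ≤ κ * (|η| * G))
    (hG : G ≤ g₀ + ℓ * D) :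
    (A + B) ^ 2 ≤ (1 - 1 / (2 * κ) + 4 * κ ^ 3 * ℓ ^ 2 * η ^ 2) * D ^ 2
      + 4 * κ ^ 3 * η ^ 2 * g₀ ^ 2 := by
  have hκ₀ : 0 ≤ κ := by linarith
  have hA_sq : A ^ 2 ≤ κ ^ 2 * η ^ 2 * (2 * (g₀ ^ 2 + ℓ ^ 2 * D ^ 2)) :=
    calc A ^ 2 ≤ (κ * (|η| * (g₀ + ℓ * D))) ^ 2 := by gcongr; exact hA.trans (by gcongr)
      _ = κ ^ 2 * η ^ 2 * (g₀ + ℓ * D) ^ 2 := by rw [mul_pow, mul_pow, sq_abs, mul_assoc]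
      _ ≤ κ ^ 2 * η ^ 2 * (2 * (g₀ ^ 2 + ℓ ^ 2 * D ^ 2)) := by
        rw [← mul_pow ℓ]
        gcongr
        exact add_sq_le
  calc (A + B) ^ 2 ≤ (1 - 1 / (2 * κ)) * D ^ 2 + 2 * κ * A ^ 2 :=
        add_sq_le_of_sq_le_one_sub_inv hκ hB
    _ ≤ (1 - 1 / (2 * κ)) * D ^ 2 + 2 * κ * (κ ^ 2 * η ^ 2 * (2 * (g₀ ^ 2 + ℓ ^ 2 * D ^ 2))) := by
        gcongr
    _ = _ := by ring

theorem statement9_general {m n : ℕ} (f : EuclideanSpace ℝ (Fin m) → EuclideanSpace ℝ (Fin n) → ℝ)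
    (ℓ μ ηx : ℝ) (hℓ : 0 < ℓ) (hμ : 0 < μ) (hκ : 2 ≤ ℓ / μ)
    (Y : Set (EuclideanSpace ℝ (Fin n))) (hYconv : Convex ℝ Y)
    (gx : EuclideanSpace ℝ (Fin m) → EuclideanSpace ℝ (Fin n) → EuclideanSpace ℝ (Fin m))
    (gy : EuclideanSpace ℝ (Fin m) → EuclideanSpace ℝ (Fin n) → EuclideanSpace ℝ (Fin n))
    (hgy : ∀ x y, HasGradientAt (fun y' => f x y') (gy x y) y)
    (hsmooth : ∀ x x' y y',
      ‖gx x y - gx x' y'‖ ≤ ℓ * (‖x - x'‖ + ‖y - y'‖) ∧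
      ‖gy x y - gy x' y'‖ ≤ ℓ * (‖x - x'‖ + ‖y - y'‖))
    (hconc : ∀ x, StrongConcaveOn Y μ (f x))
    (P : EuclideanSpace ℝ (Fin n) → EuclideanSpace ℝ (Fin n))
    (hP : ∀ z, P z ∈ Y ∧ ∀ y ∈ Y, ⟪z - P z, y - P z⟫ ≤ 0)
    (ystar : EuclideanSpace ℝ (Fin m) → EuclideanSpace ℝ (Fin n))
    (hystar : ∀ x, ystar x ∈ Y ∧ IsMaxOn (f x) Y (ystar x))
    (x : ℕ → EuclideanSpace ℝ (Fin m)) (y : ℕ → EuclideanSpace ℝ (Fin n))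
    (hy0 : y 0 ∈ Y)
    (hxupd : ∀ t, x (t + 1) = x t - ηx • gx (x t) (y t))
    (hyupd : ∀ t, y (t + 1) = P (y t + (1 / ℓ) • gy (x t) (y t))) :
    ∀ t, ‖ystar (x (t + 1)) - y (t + 1)‖ ^ 2 ≤
      (1 - 1 / (2 * (ℓ / μ)) + 4 * (ℓ / μ) ^ 3 * ℓ ^ 2 * ηx ^ 2) * ‖ystar (x t) - y t‖ ^ 2
        + 4 * (ℓ / μ) ^ 3 * ηx ^ 2 * ‖gx (x t) (ystar (x t))‖ ^ 2 := by
  have hyY : ∀ t, y t ∈ Y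
    | 0 => hy0
    | t + 1 => hyupd t ▸ (hP _).1
  intro t
  set u := ystar (x t)
  set v := ystar (x (t + 1))
  obtain ⟨hu, hmaxu⟩ := hystar (x t)
  obtain ⟨hv, hmaxv⟩ := hystar (x (t + 1))
  have hcontract : ‖u - y (t + 1)‖ ^ 2 ≤ (1 - 1 / (ℓ / μ)) * ‖u - y t‖ ^ 2 := by
    rw [one_div_div]
    refine (hconc (x t)).sq_norm_sub_le_of_projected_gradient_step hℓ (hgy (x t))
      (fun p q ↦ by simpa using (hsmooth (x t) (x t) p q).2) hmaxu hu (hyY t) (hyY (t + 1)) ?_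
    rw [hyupd]
    exact (hP _).2
  have hdrift : ‖v - u‖ ≤ ℓ / μ * (|ηx| * ‖gx (x t) (y t)‖) := by
    rw [div_mul_eq_mul_div, le_div_iff₀' hμ]
    calc μ * ‖v - u‖ ≤ ‖gy (x t) v - gy (x (t + 1)) v‖ :=
          (hconc (x t)).mul_norm_sub_le_of_isMaxOn_s9 hYconv hmaxu hmaxv hu hv
            (hgy (x t) u) (hgy (x t) v) (hgy (x (t + 1)) v)
      _ ≤ ℓ * ‖x t - x (t + 1)‖ := by simpa using (hsmooth (x t) (x (t + 1)) v v).2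
      _ = ℓ * (|ηx| * ‖gx (x t) (y t)‖) := by
        rw [hxupd, sub_sub_cancel, norm_smul, Real.norm_eq_abs]
  have hgrad : ‖gx (x t) (y t)‖ ≤ ‖gx (x t) u‖ + ℓ * ‖u - y t‖ := by
    have := (hsmooth (x t) (x t) (y t) u).1
    rw [sub_self, norm_zero, zero_add, norm_sub_rev (y t)] at this
    linarith [norm_le_insert' (gx (x t) (y t)) (gx (x t) u)]
  calc ‖v - y (t + 1)‖ ^ 2 ≤ (‖v - u‖ + ‖u - y (t + 1)‖) ^ 2 := by
        gcongr
        exact norm_sub_le_norm_sub_add_norm_sub _ _ _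
    _ ≤ _ := add_sq_le_of_contraction_of_drift (by linarith) hcontract (norm_nonneg _) hdrift hgrad

/-- Tracking-error recursion for two-time-scale GDA in the
nonconvex-strongly-concave setting: with `δ_t = ‖y*(x_t) − y_t‖²` and
`κ = ℓ/μ ≥ 2`, `δ_t ≤ (1 − 1/(2κ) + 4κ³ℓ²η_x²) δ_{t−1} + 4κ³η_x² ‖∇Φ(x_{t−1})‖²`,
where `∇Φ(x) = ∇_x f(x, y*(x))`. -/
theorem statement9 {m n : ℕ} (f : EuclideanSpace ℝ (Fin m) → EuclideanSpace ℝ (Fin n) → ℝ)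
    (ℓ μ ηx : ℝ) (hℓ : 0 < ℓ) (hμ : 0 < μ) (hκ : 2 ≤ ℓ / μ) (hηx : 0 < ηx)
    (Y : Set (EuclideanSpace ℝ (Fin n))) (hYconv : Convex ℝ Y) (hYclosed : IsClosed Y)
    (hYbdd : Bornology.IsBounded Y) (hYne : Y.Nonempty)
    (gx : EuclideanSpace ℝ (Fin m) → EuclideanSpace ℝ (Fin n) → EuclideanSpace ℝ (Fin m))
    (gy : EuclideanSpace ℝ (Fin m) → EuclideanSpace ℝ (Fin n) → EuclideanSpace ℝ (Fin n))
    (hgx : ∀ x y, HasGradientAt (fun x' => f x' y) (gx x y) x)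
    (hgy : ∀ x y, HasGradientAt (fun y' => f x y') (gy x y) y)
    (hsmooth : ∀ x x' y y',
      ‖gx x y - gx x' y'‖ ≤ ℓ * (‖x - x'‖ + ‖y - y'‖) ∧
      ‖gy x y - gy x' y'‖ ≤ ℓ * (‖x - x'‖ + ‖y - y'‖))
    (hconc : ∀ x, StrongConcaveOn Y μ (f x))
    (P : EuclideanSpace ℝ (Fin n) → EuclideanSpace ℝ (Fin n))
    (hP : ∀ z, P z ∈ Y ∧ ∀ y ∈ Y, ⟪z - P z, y - P z⟫ ≤ 0)
    (ystar : EuclideanSpace ℝ (Fin m) → EuclideanSpace ℝ (Fin n))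
    (hystar : ∀ x, ystar x ∈ Y ∧ IsMaxOn (f x) Y (ystar x))
    (x : ℕ → EuclideanSpace ℝ (Fin m)) (y : ℕ → EuclideanSpace ℝ (Fin n))
    (hy0 : y 0 ∈ Y)
    (hxupd : ∀ t, x (t + 1) = x t - ηx • gx (x t) (y t))
    (hyupd : ∀ t, y (t + 1) = P (y t + (1 / ℓ) • gy (x t) (y t))) :
    ∀ t, ‖ystar (x (t + 1)) - y (t + 1)‖ ^ 2 ≤
      (1 - 1 / (2 * (ℓ / μ)) + 4 * (ℓ / μ) ^ 3 * ℓ ^ 2 * ηx ^ 2) * ‖ystar (x t) - y t‖ ^ 2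
        + 4 * (ℓ / μ) ^ 3 * ηx ^ 2 * ‖gx (x t) (ystar (x t))‖ ^ 2 :=
  statement9_general f ℓ μ ηx hℓ hμ hκ Y hYconv gx gy hgy hsmooth hconc P hP ystar hystar x y hy0
    hxupd hyupd
end

section
/- Suppose the descent inequality Φ(x_t) ≤ Φ(x_{t−1}) − (7η/16) a_{t−1} + (9ηℓ²/16) δ_{t−1} holds for t = 1,…,T+1, where a_t = ‖∇Φ(x_t)‖², δ_0 ≤ D², and δ_t ≤ γ δ_{t−1} + β a_{t−1} with γ ≤ 1 − 1/(4κ) and (9ηℓ²/16)(4κβ) ≤ 9η/256. Then (1/(T+1)) Σ_{t=0}^{T} a_t ≤ (256/(103η(T+1)))(Φ(x_0) − min Φ) + (576κℓ²D²)/(103(T+1)). -/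
open Finset

set_option maxHeartbeats 1000000

/-- Telescoping argument for the nonconvex-strongly-concave GDA rate.
Given the descent inequality `Φ(x_t) ≤ Φ(x_{t−1}) − (7η/16)a_{t−1} + (9ηℓ²/16)δ_{t−1}`,
the contraction `δ_t ≤ γδ_{t−1} + βa_{t−1}` with `γ ≤ 1 − 1/(4κ)`, `δ_0 ≤ D²`, and
`(9ηℓ²/16)(4κβ) ≤ 9η/256`, one gets the averaged gradient bound. -/
theorem statement17 (Φx a δ : ℕ → ℝ) (η ℓ κ β γ D Φmin : ℝ)
    (hη : 0 < η) (hℓ : 0 < ℓ) (hκ : 0 < κ) (hβ : 0 ≤ β) (hD : 0 < D)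
    (hγ0 : 0 < γ) (hγ : γ ≤ 1 - 1 / (4 * κ))
    (ha : ∀ t, 0 ≤ a t) (hδ : ∀ t, 0 ≤ δ t)
    (hδ0 : δ 0 ≤ D ^ 2)
    (hdescent : ∀ t, Φx (t + 1) ≤ Φx t - (7 * η / 16) * a t + (9 * η * ℓ ^ 2 / 16) * δ t)
    (hrec : ∀ t, δ (t + 1) ≤ γ * δ t + β * a t)
    (hcond : (9 * η * ℓ ^ 2 / 16) * (4 * κ * β) ≤ 9 * η / 256)
    (hlb : ∀ t, Φmin ≤ Φx t) :
    ∀ T : ℕ,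
      (1 / ((T : ℝ) + 1)) * ∑ t ∈ Finset.range (T + 1), a t ≤
        (256 / (103 * η * ((T : ℝ) + 1))) * (Φx 0 - Φmin)
          + (576 * κ * ℓ ^ 2 * D ^ 2) / (103 * ((T : ℝ) + 1)) := by
  intro T
  set A := ∑ t ∈ Finset.range (T + 1), a t with hA
  set S := ∑ t ∈ Finset.range (T + 1), δ t with hSdef
  have hApos : 0 ≤ A := Finset.sum_nonneg fun t _ => ha t
  have hSpos : 0 ≤ S := Finset.sum_nonneg fun t _ => hδ t
  -- contraction sum
  have h1 : S ≤ δ 0 + γ * S + β * A := by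
    have hs : S = (∑ t ∈ Finset.range T, δ (t + 1)) + δ 0 := by
      rw [hSdef, Finset.sum_range_succ']
    have h2 : (∑ t ∈ Finset.range T, δ (t + 1)) ≤
        ∑ t ∈ Finset.range T, (γ * δ t + β * a t) :=
      Finset.sum_le_sum fun t _ => hrec t
    have h3 : ∑ t ∈ Finset.range T, (γ * δ t + β * a t)
        = γ * (∑ t ∈ Finset.range T, δ t) + β * (∑ t ∈ Finset.range T, a t) := by
      rw [Finset.sum_add_distrib, Finset.mul_sum, Finset.mul_sum]
    have h4 : (∑ t ∈ Finset.range T, δ t) ≤ S := by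
      rw [hSdef, Finset.sum_range_succ]; nlinarith [hδ T]
    have h5 : (∑ t ∈ Finset.range T, a t) ≤ A := by
      rw [hA, Finset.sum_range_succ]; nlinarith [ha T]
    have h4' : γ * (∑ t ∈ Finset.range T, δ t) ≤ γ * S :=
      mul_le_mul_of_nonneg_left h4 hγ0.le
    have h5' : β * (∑ t ∈ Finset.range T, a t) ≤ β * A :=
      mul_le_mul_of_nonneg_left h5 hβ
    rw [h3] at h2
    linarith [hs, h2]
  -- telescoped descent
  have htel : ∀ n : ℕ, Φx n ≤ Φx 0 - (7 * η / 16) * (∑ t ∈ Finset.range n, a t)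
      + (9 * η * ℓ ^ 2 / 16) * (∑ t ∈ Finset.range n, δ t) := by
    intro n
    induction n with
    | zero => simp
    | succ n ih =>
      have := hdescent n
      rw [Finset.sum_range_succ, Finset.sum_range_succ]
      nlinarith [this, ih]
  have h2 := htel (T + 1)
  -- S bound
  have hκinv : 1 / (4 * κ) ≤ 1 - γ := by linarith
  have hSbound : S ≤ 4 * κ * (δ 0 + β * A) := by
    have h6 : (1 / (4 * κ)) * S ≤ (1 - γ) * S := mul_le_mul_of_nonneg_right hκinv hSpos
    have h7 : (1 - γ) * S ≤ δ 0 + β * A := by linarith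
    have h8 : (1 / (4 * κ)) * S ≤ δ 0 + β * A := le_trans h6 h7
    have h9 := mul_le_mul_of_nonneg_left h8 (by positivity : (0:ℝ) ≤ 4 * κ)
    have : 4 * κ * ((1 / (4 * κ)) * S) = S := by field_simp
    linarith [this ▸ h9]
  -- combine
  have hkey : 103 * η / 256 * A ≤ (Φx 0 - Φmin) + 9 * η * ℓ ^ 2 / 16 * (4 * κ) * D ^ 2 := by
    have hℓpos : (0:ℝ) < 9 * η * ℓ ^ 2 / 16 := by positivity
    have hS' : (9 * η * ℓ ^ 2 / 16) * S ≤ (9 * η * ℓ ^ 2 / 16) * (4 * κ * (δ 0 + β * A)) :=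
      mul_le_mul_of_nonneg_left hSbound hℓpos.le
    have hδ0' : (9 * η * ℓ ^ 2 / 16) * (4 * κ) * δ 0 ≤ (9 * η * ℓ ^ 2 / 16) * (4 * κ) * D ^ 2 :=
      mul_le_mul_of_nonneg_left hδ0 (by positivity)
    have hβ' : (9 * η * ℓ ^ 2 / 16) * (4 * κ * β) * A ≤ (9 * η / 256) * A :=
      mul_le_mul_of_nonneg_right hcond hApos
    have hlbT := hlb (T + 1)
    nlinarith [h2, hS', hδ0', hβ']
  have hfinal : 103 * η * A ≤ 256 * (Φx 0 - Φmin) + 576 * η * κ * ℓ ^ 2 * D ^ 2 := by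
    nlinarith [hkey]
  have hN : (0:ℝ) < (T : ℝ) + 1 := by positivity
  have heq : (256 / (103 * η * ((T:ℝ)+1))) * (Φx 0 - Φmin)
      + (576 * κ * ℓ ^ 2 * D ^ 2) / (103 * ((T:ℝ)+1))
      = (1/((T:ℝ)+1)) * ((256/(103*η)) * (Φx 0 - Φmin) + 576*κ*ℓ^2*D^2/103) := by
    field_simp
  rw [heq]
  apply mul_le_mul_of_nonneg_left _ (by positivity : (0:ℝ) ≤ 1/((T:ℝ)+1))
  rw [div_mul_eq_mul_div, div_add_div _ _ (by positivity : (103*η:ℝ) ≠ 0)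
    (by norm_num : (103:ℝ) ≠ 0), le_div_iff₀ (by positivity)]
  nlinarith [hfinal]
end
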